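/- Let e ≥ 0, ā > 0, b̄ ≥ e and p̄, q̄ ∈ ℝ, and define b = ā + e + p̄²(b̄ − e/2), p = −p̄(2b̄ − e)/(2b − e), q = q̄ + (e/2)(p − p̄ − 1), a = (b̄ − e) − p²(b − e/2). Then b > e and the tuple (a, b, p, q, ā, b̄, p̄, q̄) satisfies all four equations of the constraint system (★). -/
import Mathlib

/-- The constraint system (★). -/
def ConstraintSystem (e a b p q abar bbar pbar qbar : ℝ) : Prop :=
  (-bbar * pbar + qbar = e / 2 + (b - e) * p + q) ∧
  (abar + (bbar - e / 2) * pbar ^ 2 = b - e) ∧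
  (bbar - e = a + (b - e / 2) * p ^ 2) ∧
  ((bbar - e) * pbar + qbar = e / 2 - b * p + q)

theorem stmt2 (e abar bbar pbar qbar b p q a : ℝ)
    (he : 0 ≤ e) (habar : 0 < abar) (hbbar : e ≤ bbar)
    (hb : b = abar + e + pbar ^ 2 * (bbar - e / 2))
    (hp : p = -pbar * (2 * bbar - e) / (2 * b - e))
    (hq : q = qbar + e / 2 * (p - pbar - 1))
    (ha : a = (bbar - e) - p ^ 2 * (b - e / 2)) :
    e < b ∧ ConstraintSystem e a b p q abar bbar pbar qbar := by
  have hbe : e < b := by nlinarith [sq_nonneg pbar]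
  have h2b : 2 * b - e ≠ 0 := by nlinarith
  refine ⟨hbe, ?_, ?_, ?_, ?_⟩
  · subst ha hq hp; field_simp; ring
  · rw [hb]; ring
  · subst ha; ring
  · subst ha hq hp; field_simp; ring
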